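/- arXiv:2501.19369 — 2 statements merged into one kernel-verified Lean document; each statement's English description precedes it below -/
import Mathlib

section
/- For each β > 0 let (φ_β, ψ_β) be a pair of β-potentials and let π_β be the probability measure on X×Y with density e^{βA+φ_β+ψ_β} with respect to μ×ν. If π is a weak* accumulation point of the family (π_β) as β → +∞, then π ∈ Π(μ,ν) and ∫ c dπ = α(c); that is, π is an optimal transference plan for the Monge–Kantorovich problem with cost c. -/
open MeasureTheory Filter

open Classical in
noncomputable def negKL {X Y : Type*} [MeasurableSpace X] [MeasurableSpace Y]
    (μ : Measure X) (ν : Measure Y) (π : Measure (X × Y)) : EReal :=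
  if π ≪ μ.prod ν ∧ Integrable (llr π (μ.prod ν)) π
  then ((- ∫ p, llr π (μ.prod ν) p ∂π : ℝ) : EReal)
  else ⊥

def IsPlan {X Y : Type*} [MeasurableSpace X] [MeasurableSpace Y]
    (μ : Measure X) (ν : Measure Y) (π : Measure (X × Y)) : Prop :=
  IsProbabilityMeasure π ∧ π.map Prod.fst = μ ∧ π.map Prod.snd = ν

noncomputable def pressure {X Y : Type*} [MeasurableSpace X] [MeasurableSpace Y]
    (μ : Measure X) (ν : Measure Y) (B : X × Y → ℝ) : EReal :=
  ⨆ π : {π : Measure (X × Y) // IsPlan μ ν π},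
    ((∫ p, B p ∂(π.1) : ℝ) : EReal) + negKL μ ν π.1

noncomputable def transportCost {X Y : Type*} [MeasurableSpace X] [MeasurableSpace Y]
    (μ : Measure X) (ν : Measure Y) (c : X × Y → ℝ) : ℝ :=
  ⨅ π : {π : Measure (X × Y) // IsPlan μ ν π}, ∫ p, c p ∂(π.1)

noncomputable def maxVal {X Y : Type*} [MeasurableSpace X] [MeasurableSpace Y]
    (μ : Measure X) (ν : Measure Y) (A : X × Y → ℝ) : ℝ :=
  ⨆ π : {π : Measure (X × Y) // IsPlan μ ν π}, ∫ p, A p ∂(π.1)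

noncomputable def Hmax {X Y : Type*} [MeasurableSpace X] [MeasurableSpace Y]
    (μ : Measure X) (ν : Measure Y) (A : X × Y → ℝ) : EReal :=
  ⨆ π : {π : Measure (X × Y) // IsPlan μ ν π ∧ ∫ p, A p ∂π = maxVal μ ν A},
    negKL μ ν π.1

/-!
Each Gibbs measure `π_β` is a plan, and marginals pass to weak limits, so the limit is a plan.
For optimality, compare `π_β` with a plan `π' ≤ M • (μ ⊗ ν)`. With `G = βA + φ_β + ψ_β`, Gibbs'
inequality `G e^G ≥ e^G - 1` gives `∫ G dπ_β ≥ 0`, while `G ≤ e^G` gives `∫ G dπ' ≤ M`; as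
`φ_β` and `ψ_β` integrate to the same value against every plan, `∫ A dπ' ≤ ∫ A dπ_β + M / β`.
Letting `β → ∞` shows that the limit beats every plan of bounded density, and these are dense in
cost: spreading the mass that a plan gives to each cell `S_i × T_j` of a fine finite partition
uniformly, as a multiple of `μ ⊗ ν`, keeps the marginals and moves the cost by little.
-/

open Set
open scoped ENNReal NNReal

lemma Continuous.integrable_of_compactSpace {Z E : Type*} [TopologicalSpace Z] [CompactSpace Z]
    [MeasurableSpace Z] [OpensMeasurableSpace Z] [NormedAddCommGroup E] {ρ : Measure Z}
    [IsFiniteMeasure ρ] {f : Z → E} (hf : Continuous f) : Integrable f ρ :=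
  hf.integrable_of_hasCompactSupport (.of_compactSpace f)

lemma integral_le_integral_add_of_le_add {Z : Type*} [MeasurableSpace Z] {ρ : Measure Z}
    [IsProbabilityMeasure ρ] {f g : Z → ℝ} (hf : Integrable f ρ) (hg : Integrable g ρ) {ε : ℝ}
    (h : ∀ z, f z ≤ g z + ε) : ∫ z, f z ∂ρ ≤ ∫ z, g z ∂ρ + ε := by
  simpa [integral_add hg (integrable_const ε)] using
    integral_mono hf (hg.add (integrable_const ε)) h

lemma MeasureTheory.Measure.map_withDensity_comp {α β : Type*} [MeasurableSpace α]
    [MeasurableSpace β] (ρ : Measure α) {k : α → β} (hk : Measurable k) {H : β → ℝ≥0∞}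
    (hH : Measurable H) :
    (ρ.withDensity (H ∘ k)).map k = (ρ.map k).withDensity H := by
  ext s hs
  rw [Measure.map_apply hk hs, withDensity_apply _ (hk hs), withDensity_apply _ hs,
    setLIntegral_map hs hH hk]
  rfl

lemma lintegral_comp_eq_sum {α ι : Type*} [MeasurableSpace α] [Fintype ι] [MeasurableSpace ι]
    [MeasurableSingletonClass ι] (ρ : Measure α) {k : α → ι}
    (hk : Measurable k) (H : ι → ℝ≥0∞) : ∫⁻ x, H (k x) ∂ρ = ∑ i, H i * ρ.map k {i} := by
  rw [← lintegral_map (measurable_of_finite H) hk, lintegral_fintype]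

lemma ae_map_apply_singleton_ne_zero {α β : Type*} [MeasurableSpace α] [MeasurableSpace β]
    [Countable β] (ρ : Measure α) {k : α → β} (hk : Measurable k) :
    ∀ᵐ x ∂ρ, ρ.map k {k x} ≠ 0 :=
  ae_of_ae_map hk.aemeasurable (ae_iff_of_countable.2 fun _ h => h)

section Discrete

variable {ι κ : Type*} [MeasurableSpace ι] [MeasurableSpace κ]
  [MeasurableSingletonClass ι] [MeasurableSingletonClass κ]
  {a : Measure ι} {b : Measure κ} {w : Measure (ι × κ)}

lemma IsPlan.sum_apply_singleton_left [Fintype κ] (hw : IsPlan a b w) (i : ι) :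
    ∑ j, w {(i, j)} = a {i} := by
  rw [← hw.2.1, Measure.map_apply measurable_fst (measurableSet_singleton i),
    measure_preimage_fst_singleton_eq_sum]

lemma IsPlan.sum_apply_singleton_right [Fintype ι] (hw : IsPlan a b w) (j : κ) :
    ∑ i, w {(i, j)} = b {j} := by
  rw [← hw.2.2, Measure.map_apply measurable_snd (measurableSet_singleton j),
    measure_preimage_snd_singleton_eq_sum]

lemma IsPlan.apply_singleton_eq_zero (hw : IsPlan a b w) {i : ι} {j : κ}
    (h : a {i} * b {j} = 0) : w {(i, j)} = 0 := by
  rw [← hw.2.1, ← hw.2.2, Measure.map_apply measurable_fst (measurableSet_singleton i),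
    Measure.map_apply measurable_snd (measurableSet_singleton j)] at h
  rcases mul_eq_zero.1 h with h | h
  exacts [measure_mono_null (by simp) h, measure_mono_null (by simp) h]

-- A cell with `a {i} * b {j} = 0` carries no `w`-mass, and `0 / 0 = 0` in `ℝ≥0∞`.
variable (a b w) in
noncomputable def blockDensity (q : ι × κ) : ℝ≥0∞ := w {q} / (a {q.1} * b {q.2})

lemma IsPlan.blockDensity_mul (hw : IsPlan a b w) [IsFiniteMeasure a] [IsFiniteMeasure b]
    (i : ι) (j : κ) : blockDensity a b w (i, j) * (a {i} * b {j}) = w {(i, j)} := by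
  rcases eq_or_ne (a {i} * b {j}) 0 with h | h
  · rw [h, mul_zero, hw.apply_singleton_eq_zero h]
  · exact ENNReal.div_mul_cancel h (by finiteness)

lemma IsPlan.blockDensity_ne_top (hw : IsPlan a b w) (q : ι × κ) :
    blockDensity a b w q ≠ ∞ := by
  rcases eq_or_ne (a {q.1} * b {q.2}) 0 with h | h
  · simp [blockDensity, hw.apply_singleton_eq_zero h]
  · exact ENNReal.div_ne_top (by have := hw.1; finiteness) h

lemma IsPlan.sum_blockDensity_mul_right [Fintype κ] (hw : IsPlan a b w) [IsFiniteMeasure a]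
    [IsFiniteMeasure b] {i : ι} (hi : a {i} ≠ 0) :
    ∑ j, blockDensity a b w (i, j) * b {j} = 1 := by
  have key : ∀ j, blockDensity a b w (i, j) * b {j} = w {(i, j)} * (a {i})⁻¹ := fun j => by
    rw [← div_eq_mul_inv, ENNReal.eq_div_iff hi (by finiteness), mul_left_comm,
      hw.blockDensity_mul]
  rw [Finset.sum_congr rfl fun j _ => key j, ← Finset.sum_mul, hw.sum_apply_singleton_left,
    ENNReal.mul_inv_cancel hi (by finiteness)]

lemma IsPlan.sum_blockDensity_mul_left [Fintype ι] (hw : IsPlan a b w) [IsFiniteMeasure a]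
    [IsFiniteMeasure b] {j : κ} (hj : b {j} ≠ 0) :
    ∑ i, blockDensity a b w (i, j) * a {i} = 1 := by
  have key : ∀ i, blockDensity a b w (i, j) * a {i} = w {(i, j)} * (b {j})⁻¹ := fun i => by
    rw [← div_eq_mul_inv, ENNReal.eq_div_iff hj (by finiteness), mul_left_comm,
      mul_comm (b _), hw.blockDensity_mul]
  rw [Finset.sum_congr rfl fun i _ => key i, ← Finset.sum_mul, hw.sum_apply_singleton_right,
    ENNReal.mul_inv_cancel hj (by finiteness)]

lemma IsPlan.withDensity_blockDensity [Countable ι] [Countable κ] (hw : IsPlan a b w)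
    [IsFiniteMeasure a] [IsFiniteMeasure b] : (a.prod b).withDensity (blockDensity a b w) = w := by
  refine Measure.ext_of_singleton fun ⟨i, j⟩ => ?_
  rw [withDensity_apply _ (measurableSet_singleton _), Measure.restrict_singleton,
    lintegral_smul_measure, lintegral_dirac, ← singleton_prod_singleton, Measure.prod_prod,
    singleton_prod_singleton, smul_eq_mul, mul_comm, hw.blockDensity_mul]

end Discrete

section Marginals

variable {X Y : Type*} [MeasurableSpace X] [MeasurableSpace Y]
  {μ : Measure X} {ν : Measure Y} {π : Measure (X × Y)}

lemma isPlan_of_map_eq [IsProbabilityMeasure μ] (h1 : π.map Prod.fst = μ)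
    (h2 : π.map Prod.snd = ν) : IsPlan μ ν π := by
  have : IsProbabilityMeasure (π.map Prod.fst) := h1 ▸ ‹_›
  exact ⟨Measure.isProbabilityMeasure_of_map Prod.fst, h1, h2⟩

lemma IsPlan.integral_comp_fst {E : Type*} [NormedAddCommGroup E] [NormedSpace ℝ E]
    (hπ : IsPlan μ ν π) {f : X → E} (hf : AEStronglyMeasurable f μ) :
    ∫ p, f p.1 ∂π = ∫ x, f x ∂μ := by
  rw [← hπ.2.1] at hf ⊢
  exact (integral_map measurable_fst.aemeasurable hf).symm

lemma IsPlan.integral_comp_snd {E : Type*} [NormedAddCommGroup E] [NormedSpace ℝ E]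
    (hπ : IsPlan μ ν π) {f : Y → E} (hf : AEStronglyMeasurable f ν) :
    ∫ p, f p.2 ∂π = ∫ y, f y ∂ν := by
  rw [← hπ.2.2] at hf ⊢
  exact (integral_map measurable_snd.aemeasurable hf).symm

lemma IsPlan.map_prodMap {ι κ : Type*} [MeasurableSpace ι] [MeasurableSpace κ]
    (hπ : IsPlan μ ν π) {f : X → ι} {g : Y → κ} (hf : Measurable f) (hg : Measurable g) :
    IsPlan (μ.map f) (ν.map g) (π.map (Prod.map f g)) := by
  have := hπ.1
  refine ⟨Measure.isProbabilityMeasure_map (hf.prodMap hg).aemeasurable, ?_, ?_⟩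
  · rw [Measure.map_map measurable_fst (hf.prodMap hg), ← hπ.2.1,
      Measure.map_map hf measurable_fst]
    rfl
  · rw [Measure.map_map measurable_snd (hf.prodMap hg), ← hπ.2.2,
      Measure.map_map hg measurable_snd]
    rfl

variable [SFinite μ] [SFinite ν] {w : X × Y → ℝ≥0∞}

lemma map_fst_withDensity (hw : Measurable w) (h : ∀ᵐ x ∂μ, ∫⁻ y, w (x, y) ∂ν = 1) :
    ((μ.prod ν).withDensity w).map Prod.fst = μ := by
  ext s hs
  rw [Measure.map_apply measurable_fst hs, withDensity_apply _ (measurable_fst hs),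
    ← prod_univ, setLIntegral_prod _ hw.aemeasurable, Measure.restrict_univ,
    setLIntegral_congr_fun_ae hs (h.mono fun x hx _ => hx), setLIntegral_one]

lemma map_snd_withDensity (hw : Measurable w) (h : ∀ᵐ y ∂ν, ∫⁻ x, w (x, y) ∂μ = 1) :
    ((μ.prod ν).withDensity w).map Prod.snd = ν := by
  ext s hs
  rw [Measure.map_apply measurable_snd hs, withDensity_apply _ (measurable_snd hs),
    ← univ_prod, setLIntegral_prod_symm _ hw.aemeasurable, Measure.restrict_univ,
    setLIntegral_congr_fun_ae hs (h.mono fun y hy _ => hy), setLIntegral_one]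

lemma isPlan_withDensity [IsProbabilityMeasure μ] (hw : Measurable w)
    (h1 : ∀ᵐ x ∂μ, ∫⁻ y, w (x, y) ∂ν = 1) (h2 : ∀ᵐ y ∂ν, ∫⁻ x, w (x, y) ∂μ = 1) :
    IsPlan μ ν ((μ.prod ν).withDensity w) :=
  isPlan_of_map_eq (map_fst_withDensity hw h1) (map_snd_withDensity hw h2)

end Marginals

theorem IsPlan.exists_le_smul_prod_map_eq {X Y ι κ : Type*} [MeasurableSpace X]
    [MeasurableSpace Y] [Fintype ι] [Fintype κ] [MeasurableSpace ι] [MeasurableSpace κ]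
    [MeasurableSingletonClass ι] [MeasurableSingletonClass κ] {μ : Measure X} {ν : Measure Y}
    [IsProbabilityMeasure μ] [IsProbabilityMeasure ν] {π : Measure (X × Y)} (hπ : IsPlan μ ν π)
    {f : X → ι} {g : Y → κ} (hf : Measurable f) (hg : Measurable g) :
    ∃ (M : ℝ≥0) (π' : Measure (X × Y)), IsPlan μ ν π' ∧ π' ≤ M • μ.prod ν ∧
      π'.map (Prod.map f g) = π.map (Prod.map f g) := by
  have hk : Measurable (Prod.map f g) := hf.prodMap hg
  have hw := hπ.map_prodMap hf hg
  set H := blockDensity (μ.map f) (ν.map g) (π.map (Prod.map f g))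
  have hH : ∀ q, H q ≠ ∞ := hw.blockDensity_ne_top
  refine ⟨∑ q, (H q).toNNReal, (μ.prod ν).withDensity (H ∘ Prod.map f g), ?_, ?_, ?_⟩
  · refine isPlan_withDensity ((measurable_of_finite H).comp hk) ?_ ?_
    · filter_upwards [ae_map_apply_singleton_ne_zero μ hf] with x hx
      rw [← hw.sum_blockDensity_mul_right hx]
      exact lintegral_comp_eq_sum ν hg fun j => H (f x, j)
    · filter_upwards [ae_map_apply_singleton_ne_zero ν hg] with y hy
      rw [← hw.sum_blockDensity_mul_left hy]
      exact lintegral_comp_eq_sum μ hf fun i => H (i, g y)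
  · rw [← Measure.coe_nnreal_smul, ← withDensity_const]
    refine withDensity_mono (Eventually.of_forall fun p => ?_)
    change H _ ≤ ((∑ q, (H q).toNNReal : ℝ≥0) : ℝ≥0∞)
    rw [← ENNReal.coe_toNNReal (hH _), ENNReal.coe_le_coe]
    exact Finset.single_le_sum (f := fun q => (H q).toNNReal) (fun _ _ => zero_le)
      (Finset.mem_univ _)
  · rw [Measure.map_withDensity_comp _ hk (measurable_of_finite H),
      ← Measure.map_prod_map _ _ hf hg, hw.withDensity_blockDensity]

lemma exists_measurable_fin_dist_lt {Z : Type*} [PseudoMetricSpace Z] [CompactSpace Z]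
    [MeasurableSpace Z] [OpensMeasurableSpace Z] {δ : ℝ} (hδ : 0 < δ) :
    ∃ (n : ℕ) (u : Fin n → Z) (f : Z → Fin n), Measurable f ∧ ∀ z, dist z (u (f z)) < δ := by
  classical
  obtain ⟨t, -, ht, hcover⟩ := finite_cover_balls_of_compact (isCompact_univ (X := Z)) hδ
  obtain ⟨n, u, -, rfl⟩ := ht.fin_param
  have hex : ∀ z, ∃ k, ∃ hk : k < n, dist z (u ⟨k, hk⟩) < δ := fun z => by
    obtain ⟨_, ⟨i, rfl⟩, hi⟩ := mem_iUnion₂.1 (hcover (mem_univ z))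
    exact ⟨i, i.2, hi⟩
  have hfind : Measurable fun z => Nat.find (hex z) := by
    refine measurable_find hex fun k => ?_
    by_cases hk : k < n
    · simp only [hk, exists_true_left]
      exact measurableSet_ball
    · simp [hk]
  refine ⟨n, u, fun z => ⟨Nat.find (hex z), (Nat.find_spec (hex z)).1⟩,
    measurable_to_countable' fun i => ?_, fun z => (Nat.find_spec (hex z)).2⟩
  convert hfind (measurableSet_singleton (i : ℕ)) using 1
  ext z
  simp [Fin.ext_iff]

theorem IsPlan.exists_le_smul_prod_integral_le {X Y : Type*}
    [MetricSpace X] [CompactSpace X] [MeasurableSpace X] [BorelSpace X]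
    [MetricSpace Y] [CompactSpace Y] [MeasurableSpace Y] [BorelSpace Y]
    {μ : Measure X} {ν : Measure Y} [IsProbabilityMeasure μ] [IsProbabilityMeasure ν]
    {π : Measure (X × Y)} (hπ : IsPlan μ ν π) {c : X × Y → ℝ} (hc : Continuous c) {ε : ℝ}
    (hε : 0 < ε) :
    ∃ (M : ℝ≥0) (π' : Measure (X × Y)), IsPlan μ ν π' ∧ π' ≤ M • μ.prod ν ∧
      ∫ p, c p ∂π' ≤ ∫ p, c p ∂π + ε := by
  obtain ⟨δ, hδ, hcδ⟩ := Metric.uniformContinuous_iff.1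
    (CompactSpace.uniformContinuous_of_continuous hc) (ε / 2) (half_pos hε)
  obtain ⟨n, u, f, hf, hfu⟩ := exists_measurable_fin_dist_lt (Z := X) hδ
  obtain ⟨m, v, g, hg, hgv⟩ := exists_measurable_fin_dist_lt (Z := Y) hδ
  obtain ⟨M, π', hπ', hle, hmap⟩ := hπ.exists_le_smul_prod_map_eq hf hg
  have := hπ.1
  have := hπ'.1
  have hk : Measurable (Prod.map f g) := hf.prodMap hg
  set cb : Fin n × Fin m → ℝ := c ∘ Prod.map u v
  have hclose : ∀ p, |c p - cb (Prod.map f g p)| < ε / 2 := fun p => by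
    rw [← Real.dist_eq]
    exact hcδ (max_lt (hfu p.1) (hgv p.2))
  have hcb : ∀ ρ : Measure (X × Y), IsProbabilityMeasure ρ →
      Integrable (fun p => cb (Prod.map f g p)) ρ :=
    fun ρ _ => (Integrable.of_finite (f := cb)).comp_measurable hk
  have hblock : ∫ p, cb (Prod.map f g p) ∂π' = ∫ p, cb (Prod.map f g p) ∂π := by
    rw [← integral_map hk.aemeasurable (measurable_of_finite cb).aestronglyMeasurable, hmap,
      integral_map hk.aemeasurable (measurable_of_finite cb).aestronglyMeasurable]
  refine ⟨M, π', hπ', hle, ?_⟩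
  calc ∫ p, c p ∂π'
      ≤ ∫ p, cb (Prod.map f g p) ∂π' + ε / 2 :=
        integral_le_integral_add_of_le_add hc.integrable_of_compactSpace (hcb _ ‹_›)
          fun p => by linarith [(abs_lt.1 (hclose p)).2]
    _ = ∫ p, cb (Prod.map f g p) ∂π + ε / 2 := by rw [hblock]
    _ ≤ ∫ p, c p ∂π + ε / 2 + ε / 2 := by
        gcongr
        exact integral_le_integral_add_of_le_add (hcb _ ‹_›) hc.integrable_of_compactSpace
          fun p => by linarith [(abs_lt.1 (hclose p)).1]
    _ = ∫ p, c p ∂π + ε := by ring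

section Gibbs

variable {Z : Type*} [TopologicalSpace Z] [CompactSpace Z] [MeasurableSpace Z]
  [OpensMeasurableSpace Z] {ρ : Measure Z} {G : Z → ℝ}

lemma integral_withDensity_exp_nonneg [IsProbabilityMeasure ρ] (hG : Continuous G)
    (hnorm : ∫ z, Real.exp (G z) ∂ρ = 1) :
    0 ≤ ∫ z, G z ∂ρ.withDensity fun z => ENNReal.ofReal (Real.exp (G z)) := by
  have hexp : Continuous fun z => Real.exp (G z) := Real.continuous_exp.comp hG
  rw [integral_withDensity_eq_integral_toReal_smul hexp.measurable.ennreal_ofReal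
    (ae_of_all _ fun _ => ENNReal.ofReal_lt_top)]
  simp only [ENNReal.toReal_ofReal (Real.exp_pos _).le, smul_eq_mul]
  have key : ∀ z, Real.exp (G z) - 1 ≤ Real.exp (G z) * G z := fun z => by
    have := mul_le_mul_of_nonneg_left (Real.add_one_le_exp (-G z)) (Real.exp_pos (G z)).le
    rw [← Real.exp_add, add_neg_cancel, Real.exp_zero] at this
    linarith
  calc (0 : ℝ) = ∫ z, (Real.exp (G z) - 1) ∂ρ := by
        rw [integral_sub hexp.integrable_of_compactSpace (integrable_const 1), hnorm]
        simp
    _ ≤ ∫ z, Real.exp (G z) * G z ∂ρ :=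
        integral_mono (hexp.sub continuous_const).integrable_of_compactSpace
          (hexp.mul hG).integrable_of_compactSpace key

lemma integral_le_mul_integral_exp_of_le_smul [IsFiniteMeasure ρ] (hG : Continuous G)
    {π : Measure Z} [IsFiniteMeasure π] {M : ℝ≥0} (hπ : π ≤ M • ρ) :
    ∫ z, G z ∂π ≤ M * ∫ z, Real.exp (G z) ∂ρ := by
  have hmax : Continuous fun z => max (G z) 0 := hG.max continuous_const
  calc ∫ z, G z ∂π ≤ ∫ z, max (G z) 0 ∂π :=
        integral_mono hG.integrable_of_compactSpace hmax.integrable_of_compactSpace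
          fun z => le_max_left _ _
    _ ≤ ∫ z, max (G z) 0 ∂(M • ρ) :=
        integral_mono_measure hπ (ae_of_all _ fun z => le_max_right _ _)
          hmax.integrable_of_compactSpace
    _ = M * ∫ z, max (G z) 0 ∂ρ := by rw [integral_smul_nnreal_measure, NNReal.smul_def]; rfl
    _ ≤ M * ∫ z, Real.exp (G z) ∂ρ := by
        refine mul_le_mul_of_nonneg_left (integral_mono hmax.integrable_of_compactSpace
          (by fun_prop : Continuous fun z => Real.exp (G z)).integrable_of_compactSpace
          fun z => max_le ?_ (Real.exp_pos _).le) M.coe_nonneg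
        linarith [Real.add_one_le_exp (G z)]

end Gibbs

section Potentials

variable {X Y : Type*} [MetricSpace X] [CompactSpace X] [MeasurableSpace X] [BorelSpace X]
  [MetricSpace Y] [CompactSpace Y] [MeasurableSpace Y] [BorelSpace Y]
  {μ : Measure X} {ν : Measure Y} {β : ℝ} {A : X × Y → ℝ} {φ : X → ℝ} {ψ : Y → ℝ}

variable (μ ν β A φ ψ) in
noncomputable def gibbsMeasure : Measure (X × Y) :=
  (μ.prod ν).withDensity fun p => ENNReal.ofReal (Real.exp (β * A p + φ p.1 + ψ p.2))

lemma IsPlan.integral_potential (hA : Continuous A) (hφ : Continuous φ) (hψ : Continuous ψ)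
    {π : Measure (X × Y)} (hπ : IsPlan μ ν π) :
    ∫ p, (β * A p + φ p.1 + ψ p.2) ∂π = β * ∫ p, A p ∂π + (∫ x, φ x ∂μ + ∫ y, ψ y ∂ν) := by
  have := hπ.1
  have hβA : Integrable (fun p => β * A p) π :=
    (by fun_prop : Continuous _).integrable_of_compactSpace
  have hφ₁ : Integrable (fun p : X × Y => φ p.1) π :=
    (by fun_prop : Continuous _).integrable_of_compactSpace
  have hψ₂ : Integrable (fun p : X × Y => ψ p.2) π :=
    (by fun_prop : Continuous _).integrable_of_compactSpace
  have hβAφ : Integrable (fun p : X × Y => β * A p + φ p.1) π := hβA.add hφ₁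
  rw [integral_add hβAφ hψ₂, integral_add hβA hφ₁,
    integral_const_mul, hπ.integral_comp_fst hφ.aestronglyMeasurable,
    hπ.integral_comp_snd hψ.aestronglyMeasurable, add_assoc]

variable [IsProbabilityMeasure μ] [IsProbabilityMeasure ν]

lemma isPlan_gibbsMeasure (hA : Continuous A) (hφ : Continuous φ) (hψ : Continuous ψ)
    (h1 : ∀ y, ∫ x, Real.exp (β * A (x, y) + φ x + ψ y) ∂μ = 1)
    (h2 : ∀ x, ∫ y, Real.exp (β * A (x, y) + φ x + ψ y) ∂ν = 1) :
    IsPlan μ ν (gibbsMeasure μ ν β A φ ψ) := by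
  have hw : Continuous fun p : X × Y => Real.exp (β * A p + φ p.1 + ψ p.2) := by fun_prop
  refine isPlan_withDensity hw.measurable.ennreal_ofReal (ae_of_all _ fun x => ?_)
    (ae_of_all _ fun y => ?_)
  · have hsec : Continuous fun y => Real.exp (β * A (x, y) + φ x + ψ y) := by fun_prop
    rw [← ENNReal.ofReal_one, ← h2 x, ofReal_integral_eq_lintegral_ofReal
      hsec.integrable_of_compactSpace (ae_of_all _ fun _ => (Real.exp_pos _).le)]
  · have hsec : Continuous fun x => Real.exp (β * A (x, y) + φ x + ψ y) := by fun_prop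
    rw [← ENNReal.ofReal_one, ← h1 y, ofReal_integral_eq_lintegral_ofReal
      hsec.integrable_of_compactSpace (ae_of_all _ fun _ => (Real.exp_pos _).le)]

theorem integral_le_integral_gibbsMeasure_add (hβ : 0 < β) (hA : Continuous A)
    (hφ : Continuous φ) (hψ : Continuous ψ)
    (h1 : ∀ y, ∫ x, Real.exp (β * A (x, y) + φ x + ψ y) ∂μ = 1)
    (h2 : ∀ x, ∫ y, Real.exp (β * A (x, y) + φ x + ψ y) ∂ν = 1)
    {π : Measure (X × Y)} (hπ : IsPlan μ ν π) {M : ℝ≥0} (hle : π ≤ M • μ.prod ν) :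
    ∫ p, A p ∂π ≤ ∫ p, A p ∂gibbsMeasure μ ν β A φ ψ + M / β := by
  have hG : Continuous fun p : X × Y => β * A p + φ p.1 + ψ p.2 := by fun_prop
  have hnorm : ∫ p, Real.exp (β * A p + φ p.1 + ψ p.2) ∂μ.prod ν = 1 := by
    rw [integral_prod _ (by fun_prop : Continuous fun p : X × Y =>
      Real.exp (β * A p + φ p.1 + ψ p.2)).integrable_of_compactSpace]
    simp [h2]
  have := hπ.1
  have lower := integral_withDensity_exp_nonneg hG hnorm
  have upper := integral_le_mul_integral_exp_of_le_smul hG hle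
  rw [← gibbsMeasure, (isPlan_gibbsMeasure hA hφ hψ h1 h2).integral_potential hA hφ hψ] at lower
  rw [hπ.integral_potential hA hφ hψ, hnorm, mul_one] at upper
  refine le_of_mul_le_mul_left ?_ hβ
  rw [mul_add, mul_div_cancel₀ _ hβ.ne']
  linarith

end Potentials

lemma continuous_of_abs_sub_le_mul_dist_add {X Y : Type*} [PseudoMetricSpace X]
    [PseudoMetricSpace Y] {c : X × Y → ℝ} {L : ℝ}
    (hc : ∀ p q : X × Y, |c p - c q| ≤ L * (dist p.1 q.1 + dist p.2 q.2)) : Continuous c := by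
  refine continuous_iff_continuousAt.2 fun p => tendsto_iff_dist_tendsto_zero.2 <|
    squeeze_zero (fun _ => dist_nonneg) (fun q => (Real.dist_eq _ _).trans_le (hc q p)) ?_
  have hcont : Continuous fun q : X × Y => L * (dist q.1 p.1 + dist q.2 p.2) := by fun_prop
  simpa using hcont.tendsto p

lemma isPlan_of_tendsto {X Y ι : Type*} [TopologicalSpace X] [HasOuterApproxClosed X]
    [MeasurableSpace X] [BorelSpace X] [TopologicalSpace Y] [HasOuterApproxClosed Y]
    [MeasurableSpace Y] [BorelSpace Y] {μ : Measure X} {ν : Measure Y} [IsFiniteMeasure μ]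
    [IsFiniteMeasure ν] {l : Filter ι} [l.NeBot] {πs : ι → Measure (X × Y)}
    (hπs : ∀ i, IsPlan μ ν (πs i)) {π : Measure (X × Y)} [IsProbabilityMeasure π]
    (h : ∀ f : X × Y → ℝ, Continuous f →
      Tendsto (fun i => ∫ p, f p ∂(πs i)) l (nhds (∫ p, f p ∂π))) :
    IsPlan μ ν π := by
  refine ⟨‹_›, ext_of_forall_integral_eq_of_IsFiniteMeasure fun f => ?_,
    ext_of_forall_integral_eq_of_IsFiniteMeasure fun f => ?_⟩
  · rw [integral_map measurable_fst.aemeasurable f.continuous.aestronglyMeasurable]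
    refine tendsto_nhds_unique (h _ (f.continuous.comp continuous_fst)) ?_
    simp only [(hπs _).integral_comp_fst f.continuous.aestronglyMeasurable]
    exact tendsto_const_nhds
  · rw [integral_map measurable_snd.aemeasurable f.continuous.aestronglyMeasurable]
    refine tendsto_nhds_unique (h _ (f.continuous.comp continuous_snd)) ?_
    simp only [(hπs _).integral_comp_snd f.continuous.aestronglyMeasurable]
    exact tendsto_const_nhds

lemma IsPlan.integral_eq_transportCost {X Y : Type*} [MeasurableSpace X] [MeasurableSpace Y]
    {μ : Measure X} {ν : Measure Y} {π : Measure (X × Y)} (hπ : IsPlan μ ν π)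
    {c : X × Y → ℝ} (hmin : ∀ π', IsPlan μ ν π' → ∫ p, c p ∂π ≤ ∫ p, c p ∂π') :
    ∫ p, c p ∂π = transportCost μ ν c := by
  have : Nonempty {π : Measure (X × Y) // IsPlan μ ν π} := ⟨⟨π, hπ⟩⟩
  unfold transportCost
  exact le_antisymm (le_ciInf fun π' => hmin π'.1 π'.2)
    (ciInf_le ⟨_, forall_mem_range.2 fun π' : {π // IsPlan μ ν π} => hmin π'.1 π'.2⟩ ⟨π, hπ⟩)

theorem stmt11_general
    {X Y : Type*}
    [MetricSpace X] [CompactSpace X] [MeasurableSpace X] [BorelSpace X]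
    [MetricSpace Y] [CompactSpace Y] [MeasurableSpace Y] [BorelSpace Y]
    (μ : Measure X) [IsProbabilityMeasure μ]
    (ν : Measure Y) [IsProbabilityMeasure ν]
    (c : X × Y → ℝ) (L : ℝ)
    (hc : ∀ p q : X × Y, |c p - c q| ≤ L * (dist p.1 q.1 + dist p.2 q.2))
    (A : X × Y → ℝ) (hA : A = fun p => - c p)
    (φF : ℝ → X → ℝ) (ψF : ℝ → Y → ℝ)
    (hφc : ∀ β : ℝ, 0 < β → Continuous (φF β))
    (hψc : ∀ β : ℝ, 0 < β → Continuous (ψF β))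
    (h1 : ∀ β : ℝ, 0 < β → ∀ y : Y,
      ∫ x, Real.exp (β * A (x, y) + φF β x + ψF β y) ∂μ = 1)
    (h2 : ∀ β : ℝ, 0 < β → ∀ x : X,
      ∫ y, Real.exp (β * A (x, y) + φF β x + ψF β y) ∂ν = 1)
    (πF : ℝ → Measure (X × Y))
    (hπF : ∀ β : ℝ, πF β = (μ.prod ν).withDensity
      (fun p => ENNReal.ofReal (Real.exp (β * A p + φF β p.1 + ψF β p.2))))
    (βs : ℕ → ℝ) (hβpos : ∀ n, 0 < βs n) (hβtop : Tendsto βs atTop atTop)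
    (πinf : Measure (X × Y)) [IsProbabilityMeasure πinf]
    (hacc : ∀ f : X × Y → ℝ, Continuous f →
      Tendsto (fun n => ∫ p, f p ∂(πF (βs n))) atTop (nhds (∫ p, f p ∂πinf)))
    :
    IsPlan μ ν πinf ∧ ∫ p, c p ∂πinf = transportCost μ ν c := by
  have hc_cont : Continuous c := continuous_of_abs_sub_le_mul_dist_add hc
  have hA_cont : Continuous A := hA ▸ hc_cont.neg
  have hA_int : ∀ ρ : Measure (X × Y), ∫ p, A p ∂ρ = -∫ p, c p ∂ρ := fun ρ => by
    simp only [hA, integral_neg]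
  have hgibbs : ∀ n, πF (βs n) = gibbsMeasure μ ν (βs n) A (φF (βs n)) (ψF (βs n)) :=
    fun n => hπF (βs n)
  have hplan : ∀ n, IsPlan μ ν (πF (βs n)) := fun n => hgibbs n ▸
    isPlan_gibbsMeasure hA_cont (hφc _ (hβpos n)) (hψc _ (hβpos n)) (h1 _ (hβpos n))
      (h2 _ (hβpos n))
  have hinf : IsPlan μ ν πinf := isPlan_of_tendsto hplan hacc
  refine ⟨hinf, hinf.integral_eq_transportCost fun π hπ => le_of_forall_pos_le_add fun ε hε => ?_⟩
  obtain ⟨M, π', hπ', hle, hcost⟩ := hπ.exists_le_smul_prod_integral_le hc_cont hε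
  have hnear : ∀ n, ∫ p, c p ∂πF (βs n) ≤ ∫ p, c p ∂π' + M / βs n := fun n => by
    have := integral_le_integral_gibbsMeasure_add (hβpos n) hA_cont (hφc _ (hβpos n))
      (hψc _ (hβpos n)) (h1 _ (hβpos n)) (h2 _ (hβpos n)) hπ' hle
    rw [hA_int, hA_int, ← hgibbs] at this
    linarith
  have hlim : ∫ p, c p ∂πinf ≤ ∫ p, c p ∂π' :=
    le_of_tendsto_of_tendsto' (hacc c hc_cont)
      (by simpa using tendsto_const_nhds.add (tendsto_const_nhds.div_atTop hβtop)) hnear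
  linarith

theorem stmt11
    {X Y : Type*}
    [MetricSpace X] [CompactSpace X] [MeasurableSpace X] [BorelSpace X]
    [MetricSpace Y] [CompactSpace Y] [MeasurableSpace Y] [BorelSpace Y]
    (μ : Measure X) [IsProbabilityMeasure μ] [μ.IsOpenPosMeasure]
    (ν : Measure Y) [IsProbabilityMeasure ν] [ν.IsOpenPosMeasure]
    (c : X × Y → ℝ) (L : ℝ)
    (hc : ∀ p q : X × Y, |c p - c q| ≤ L * (dist p.1 q.1 + dist p.2 q.2))
    (A : X × Y → ℝ) (hA : A = fun p => - c p)
    (φF : ℝ → X → ℝ) (ψF : ℝ → Y → ℝ)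
    (hφc : ∀ β : ℝ, 0 < β → Continuous (φF β))
    (hψc : ∀ β : ℝ, 0 < β → Continuous (ψF β))
    (h1 : ∀ β : ℝ, 0 < β → ∀ y : Y,
      ∫ x, Real.exp (β * A (x, y) + φF β x + ψF β y) ∂μ = 1)
    (h2 : ∀ β : ℝ, 0 < β → ∀ x : X,
      ∫ y, Real.exp (β * A (x, y) + φF β x + ψF β y) ∂ν = 1)
    (πF : ℝ → Measure (X × Y))
    (hπF : ∀ β : ℝ, πF β = (μ.prod ν).withDensity
      (fun p => ENNReal.ofReal (Real.exp (β * A p + φF β p.1 + ψF β p.2))))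
    (βs : ℕ → ℝ) (hβpos : ∀ n, 0 < βs n) (hβtop : Tendsto βs atTop atTop)
    (πinf : Measure (X × Y)) [IsProbabilityMeasure πinf]
    (hacc : ∀ f : X × Y → ℝ, Continuous f →
      Tendsto (fun n => ∫ p, f p ∂(πF (βs n))) atTop (nhds (∫ p, f p ∂πinf)))
    :
    IsPlan μ ν πinf ∧ ∫ p, c p ∂πinf = transportCost μ ν c :=
  stmt11_general μ ν c L hc A hA φF ψF hφc hψc h1 h2 πF hπF βs hβpos hβtop πinf hacc
end

section
/- For each β > 0 let (φ_β, ψ_β) be a pair of β-potentials and let π_β be the probability measure on X×Y with density e^{βA+φ_β+ψ_β} with respect to μ×ν. Suppose φ_β/β → φ uniformly and ψ_β/β → ψ uniformly as β → +∞, and set I(x,y) = c(x,y) − φ(x) − ψ(y). Then (π_β) satisfies a large deviation principle with rate function I: for every closed set C ⊆ X×Y, limsup_{β→+∞} (1/β) log π_β(C) ≤ −inf_{(x,y)∈C} I(x,y), and for every open set U ⊆ X×Y, liminf_{β→+∞} (1/β) log π_β(U) ≥ −inf_{(x,y)∈U} I(x,y). -/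
/-!
The density of `π_β` is `exp (β A + φ_β + ψ_β)`, and by uniform convergence this exponent
divided by `β` is `-I + o(1)` uniformly on `X × Y`. On a measurable set `S` this gives
`π_β(S) ≤ exp (β (-inf_S I + o(1)))`, hence the upper bound. For the lower bound, fix `p₀` in an
open set `U`: continuity of `I` gives an open `V ⊆ U` containing `p₀` on which
`I < I p₀ + ε`, and `V` has positive `μ ⊗ ν`-measure because `μ` and `ν` charge open sets, so
`π_β(U) ≥ (μ ⊗ ν)(V) · exp (β (-I p₀ - 2ε))`.
-/

open MeasureTheory Filter

lemma TendstoUniformly.eventually_mul_sub_le_and_le_mul_add {Z : Type*} {E : ℝ → Z → ℝ}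
    {J : Z → ℝ} (hE : TendstoUniformly (fun β p => E β p / β) J atTop) {δ : ℝ} (hδ : 0 < δ) :
    ∀ᶠ β in atTop, 0 < β ∧ ∀ p, β * (J p - δ) ≤ E β p ∧ E β p ≤ β * (J p + δ) := by
  filter_upwards [Metric.tendstoUniformly_iff.1 hE δ hδ, eventually_gt_atTop 0] with β hβE hβ
  refine ⟨hβ, fun p => ?_⟩
  obtain ⟨hlo, hhi⟩ := abs_sub_lt_iff.1 (hβE p)
  constructor
  · rw [← le_div_iff₀' hβ]; linarith
  · rw [← div_le_iff₀' hβ]; linarith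

section WithDensityExp

variable {Z : Type*} [MeasurableSpace Z] (m : Measure Z)

lemma log_withDensity_exp_le [IsProbabilityMeasure m] (E : Z → ℝ)
    {S : Set Z} (hS : MeasurableSet S) {b : ℝ} (hb : ∀ p ∈ S, E p ≤ b) :
    ENNReal.log (m.withDensity (fun p => ENNReal.ofReal (Real.exp (E p))) S) ≤ b := by
  have hπS : m.withDensity (fun p => ENNReal.ofReal (Real.exp (E p))) S ≤
      ENNReal.ofReal (Real.exp b) :=
    calc m.withDensity (fun p => ENNReal.ofReal (Real.exp (E p))) S
        ≤ ∫⁻ _ in S, ENNReal.ofReal (Real.exp b) ∂m := by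
          rw [withDensity_apply _ hS]
          exact setLIntegral_mono measurable_const fun p hp =>
            ENNReal.ofReal_le_ofReal (Real.exp_le_exp.2 (hb p hp))
      _ = ENNReal.ofReal (Real.exp b) * m S := setLIntegral_const _ _
      _ ≤ ENNReal.ofReal (Real.exp b) := mul_le_of_le_one_right' prob_le_one
  calc _ ≤ ENNReal.log (ENNReal.ofReal (Real.exp b)) := ENNReal.log_monotone hπS
    _ = b := by rw [ENNReal.log_ofReal_of_pos (Real.exp_pos b), Real.log_exp]

lemma log_withDensity_exp_ge (E : Z → ℝ) {S T : Set Z}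
    (hS : MeasurableSet S) (hT : MeasurableSet T) (hTS : T ⊆ S) {a : ℝ}
    (ha : ∀ p ∈ T, a ≤ E p) :
    a + ENNReal.log (m T) ≤
      ENNReal.log (m.withDensity (fun p => ENNReal.ofReal (Real.exp (E p))) S) := by
  have hπS : ENNReal.ofReal (Real.exp a) * m T ≤
      m.withDensity (fun p => ENNReal.ofReal (Real.exp (E p))) S :=
    calc ENNReal.ofReal (Real.exp a) * m T
        = ∫⁻ _ in T, ENNReal.ofReal (Real.exp a) ∂m := (setLIntegral_const _ _).symm
      _ ≤ ∫⁻ p in T, ENNReal.ofReal (Real.exp (E p)) ∂m :=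
          setLIntegral_mono' hT fun p hp => ENNReal.ofReal_le_ofReal (Real.exp_le_exp.2 (ha p hp))
      _ ≤ ∫⁻ p in S, ENNReal.ofReal (Real.exp (E p)) ∂m := lintegral_mono_set hTS
      _ = _ := (withDensity_apply _ hS).symm
  calc (a : EReal) + ENNReal.log (m T)
      = ENNReal.log (ENNReal.ofReal (Real.exp a) * m T) := by
        rw [ENNReal.log_mul_add, ENNReal.log_ofReal_of_pos (Real.exp_pos a), Real.log_exp]
    _ ≤ _ := ENNReal.log_monotone hπS

variable {E : ℝ → Z → ℝ} {J : Z → ℝ}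

lemma eventually_inv_mul_log_withDensity_exp_le [IsProbabilityMeasure m]
    (hE : TendstoUniformly (fun β p => E β p / β) J atTop) {S : Set Z} (hS : MeasurableSet S)
    {b : ℝ} (hb : ∀ p ∈ S, J p ≤ b) {ε : ℝ} (hε : 0 < ε) :
    ∀ᶠ β in atTop, ((β⁻¹ : ℝ) : EReal) *
      ENNReal.log (m.withDensity (fun p => ENNReal.ofReal (Real.exp (E β p))) S) ≤
        ((b + ε : ℝ) : EReal) := by
  filter_upwards [hE.eventually_mul_sub_le_and_le_mul_add hε] with β ⟨hβ, hEβ⟩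
  have hlog := log_withDensity_exp_le m (E β) hS (b := β * (b + ε)) fun p hp =>
    (hEβ p).2.trans (by gcongr; exact hb p hp)
  calc _ ≤ ((β⁻¹ : ℝ) : EReal) * ((β * (b + ε) : ℝ) : EReal) := by gcongr
    _ = ((b + ε : ℝ) : EReal) := by rw [← EReal.coe_mul, inv_mul_cancel_left₀ hβ.ne']

lemma eventually_le_inv_mul_log_withDensity_exp [IsFiniteMeasure m]
    (hE : TendstoUniformly (fun β p => E β p / β) J atTop) {S T : Set Z}
    (hS : MeasurableSet S) (hT : MeasurableSet T) (hTS : T ⊆ S) (hT₀ : m T ≠ 0)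
    {a : ℝ} (ha : ∀ p ∈ T, a ≤ J p) {ε : ℝ} (hε : 0 < ε) :
    ∀ᶠ β in atTop, ((a - ε : ℝ) : EReal) ≤ ((β⁻¹ : ℝ) : EReal) *
      ENNReal.log (m.withDensity (fun p => ENNReal.ofReal (Real.exp (E β p))) S) := by
  set k := Real.log (m T).toReal
  have hk : Tendsto (fun β : ℝ => β⁻¹ * k) atTop (nhds 0) := by
    simpa using tendsto_inv_atTop_zero.mul_const k
  filter_upwards [hE.eventually_mul_sub_le_and_le_mul_add (half_pos hε),
    hk.eventually (lt_mem_nhds (neg_lt_zero.2 (half_pos hε)))] with β ⟨hβ, hEβ⟩ hkβ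
  have hlog := log_withDensity_exp_ge m (E β) hS hT hTS (a := β * (a - ε / 2)) fun p hp =>
    (by gcongr; exact ha p hp : β * (a - ε / 2) ≤ β * (J p - ε / 2)).trans (hEβ p).1
  rw [ENNReal.log_pos_real hT₀ (measure_ne_top m T), ← EReal.coe_add] at hlog
  calc ((a - ε : ℝ) : EReal) ≤ ((β⁻¹ * (β * (a - ε / 2) + k) : ℝ) : EReal) := by
        rw [mul_add, inv_mul_cancel_left₀ hβ.ne']
        exact EReal.coe_le_coe_iff.2 (by linarith)
    _ ≤ _ := by rw [EReal.coe_mul]; gcongr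

theorem limsup_inv_mul_log_withDensity_exp_le [IsProbabilityMeasure m] {I : Z → ℝ}
    (hE : TendstoUniformly (fun β p => E β p / β) (fun p => -I p) atTop)
    {S : Set Z} (hS : MeasurableSet S) :
    limsup (fun β : ℝ => ((β⁻¹ : ℝ) : EReal) *
      ENNReal.log (m.withDensity (fun p => ENNReal.ofReal (Real.exp (E β p))) S)) atTop ≤
        -⨅ p ∈ S, (I p : EReal) := by
  rw [EReal.le_neg]
  refine EReal.ge_of_forall_gt_iff_ge.1 fun t ht => ?_
  rw [EReal.le_neg, ← EReal.coe_neg]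
  refine EReal.le_of_forall_lt_iff_le.1 fun z hz => ?_
  have htI : ∀ p ∈ S, -I p ≤ -t := fun p hp =>
    neg_le_neg (EReal.coe_le_coe_iff.1 (le_iInf₂_iff.1 ht.le p hp))
  refine limsup_le_of_le (by isBoundedDefault) ?_
  have := eventually_inv_mul_log_withDensity_exp_le m hE hS htI
    (sub_pos.2 (EReal.coe_lt_coe_iff.1 hz))
  rwa [add_sub_cancel] at this

theorem le_liminf_inv_mul_log_withDensity_exp [TopologicalSpace Z] [OpensMeasurableSpace Z]
    [IsFiniteMeasure m] [m.IsOpenPosMeasure] {I : Z → ℝ} (hI : Continuous I)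
    (hE : TendstoUniformly (fun β p => E β p / β) (fun p => -I p) atTop)
    {U : Set Z} (hU : IsOpen U) :
    -⨅ p ∈ U, (I p : EReal) ≤ liminf (fun β : ℝ => ((β⁻¹ : ℝ) : EReal) *
      ENNReal.log (m.withDensity (fun p => ENNReal.ofReal (Real.exp (E β p))) U)) atTop := by
  rw [EReal.neg_le]
  refine le_iInf₂ fun p₀ hp₀ => ?_
  rw [EReal.neg_le, ← EReal.coe_neg]
  refine EReal.ge_of_forall_gt_iff_ge.1 fun z hz => ?_
  obtain ⟨ε, hε, rfl⟩ : ∃ ε, 0 < ε ∧ z = -I p₀ - ε - ε :=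
    ⟨(-I p₀ - z) / 2, half_pos (sub_pos.2 (EReal.coe_lt_coe_iff.1 hz)), by ring⟩
  set V := U ∩ I ⁻¹' Set.Iio (I p₀ + ε)
  have hV : IsOpen V := hU.inter (isOpen_Iio.preimage hI)
  have hV₀ : m V ≠ 0 := (hV.measure_pos m ⟨p₀, hp₀, by simpa using hε⟩).ne'
  have haV : ∀ p ∈ V, -I p₀ - ε ≤ -I p := fun p hp => by
    have hIp : I p < I p₀ + ε := hp.2
    linarith
  refine le_liminf_of_le (by isBoundedDefault) ?_
  exact eventually_le_inv_mul_log_withDensity_exp m hE hU.measurableSet hV.measurableSet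
    Set.inter_subset_left hV₀ haV hε

end WithDensityExp

lemma continuous_of_abs_sub_le_mul_dist_add_dist {X Y : Type*} [PseudoMetricSpace X]
    [PseudoMetricSpace Y] {f : X × Y → ℝ} {L : ℝ}
    (hf : ∀ p q : X × Y, |f p - f q| ≤ L * (dist p.1 q.1 + dist p.2 q.2)) : Continuous f := by
  refine continuous_iff_continuousAt.2 fun p => tendsto_iff_dist_tendsto_zero.2 ?_
  have hlim : Tendsto (fun q : X × Y => L * (dist q.1 p.1 + dist q.2 p.2)) (nhds p) (nhds 0) := by
    have : Continuous fun q : X × Y => L * (dist q.1 p.1 + dist q.2 p.2) := by fun_prop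
    simpa using this.tendsto p
  exact squeeze_zero (fun _ => dist_nonneg) (fun q => (Real.dist_eq _ _).trans_le (hf q p)) hlim

lemma continuous_of_tendstoUniformly_div {X : Type*} [TopologicalSpace X] {F : ℝ → X → ℝ}
    {f : X → ℝ} (hF : ∀ β, 0 < β → Continuous (F β))
    (h : TendstoUniformly (fun β x => F β x / β) f atTop) : Continuous f :=
  h.continuous ((eventually_gt_atTop 0).mono fun β hβ => (hF β hβ).div_const β).frequently

theorem stmt15_general
    {X Y : Type*}
    [MetricSpace X] [CompactSpace X] [MeasurableSpace X] [BorelSpace X]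
    [MetricSpace Y] [MeasurableSpace Y] [BorelSpace Y]
    (μ : Measure X) [IsProbabilityMeasure μ] [μ.IsOpenPosMeasure]
    (ν : Measure Y) [IsProbabilityMeasure ν] [ν.IsOpenPosMeasure]
    (c : X × Y → ℝ) (L : ℝ)
    (hc : ∀ p q : X × Y, |c p - c q| ≤ L * (dist p.1 q.1 + dist p.2 q.2))
    (A : X × Y → ℝ) (hA : A = fun p => - c p)
    (φF : ℝ → X → ℝ) (ψF : ℝ → Y → ℝ)
    (hφc : ∀ β : ℝ, 0 < β → Continuous (φF β))
    (hψc : ∀ β : ℝ, 0 < β → Continuous (ψF β))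
    (πF : ℝ → Measure (X × Y))
    (hπF : ∀ β : ℝ, πF β = (μ.prod ν).withDensity
      (fun p => ENNReal.ofReal (Real.exp (β * A p + φF β p.1 + ψF β p.2))))
    (φ : X → ℝ) (ψ : Y → ℝ)
    (hφ : TendstoUniformly (fun β x => φF β x / β) φ atTop)
    (hψ : TendstoUniformly (fun β y => ψF β y / β) ψ atTop)
    (I : X × Y → ℝ) (hI : I = fun p => c p - φ p.1 - ψ p.2) :
    (∀ C : Set (X × Y), IsClosed C →
      Filter.limsup (fun β : ℝ => ((β⁻¹ : ℝ) : EReal) * ENNReal.log (πF β C)) atTop ≤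
        - ⨅ p ∈ C, ((I p : ℝ) : EReal)) ∧
    (∀ U : Set (X × Y), IsOpen U →
      - ⨅ p ∈ U, ((I p : ℝ) : EReal) ≤
        Filter.liminf (fun β : ℝ => ((β⁻¹ : ℝ) : EReal) * ENNReal.log (πF β U)) atTop) := by
  have hIc : Continuous I := by
    rw [hI]
    exact ((continuous_of_abs_sub_le_mul_dist_add_dist hc).sub
      ((continuous_of_tendstoUniformly_div hφc hφ).comp continuous_fst)).sub
      ((continuous_of_tendstoUniformly_div hψc hψ).comp continuous_snd)
  have hAA : TendstoUniformly (fun (_ : ℝ) p => A p) A atTop :=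
    fun u hu => .of_forall fun _ _ => refl_mem_uniformity hu
  have hE : TendstoUniformly (fun β p => (β * A p + φF β p.1 + ψF β p.2) / β)
      (fun p => -I p) atTop := by
    have hlim : A + φ ∘ Prod.fst + ψ ∘ Prod.snd = fun p => -I p := by
      ext p
      simp only [hA, hI, Pi.add_apply, Function.comp_apply]
      ring
    have hsum := (hAA.add (hφ.comp Prod.fst)).add (hψ.comp Prod.snd)
    rw [hlim] at hsum
    refine (tendstoUniformly_congr ?_).1 hsum
    filter_upwards [eventually_ne_atTop 0] with β hβ
    ext p
    simp only [Pi.add_apply, Function.comp_apply]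
    field_simp
  rw [funext hπF]
  exact ⟨fun C hC => limsup_inv_mul_log_withDensity_exp_le _ hE hC.measurableSet,
    fun U hU => le_liminf_inv_mul_log_withDensity_exp _ hIc hE hU⟩

theorem stmt15
    {X Y : Type*}
    [MetricSpace X] [CompactSpace X] [MeasurableSpace X] [BorelSpace X]
    [MetricSpace Y] [CompactSpace Y] [MeasurableSpace Y] [BorelSpace Y]
    (μ : Measure X) [IsProbabilityMeasure μ] [μ.IsOpenPosMeasure]
    (ν : Measure Y) [IsProbabilityMeasure ν] [ν.IsOpenPosMeasure]
    (c : X × Y → ℝ) (L : ℝ)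
    (hc : ∀ p q : X × Y, |c p - c q| ≤ L * (dist p.1 q.1 + dist p.2 q.2))
    (A : X × Y → ℝ) (hA : A = fun p => - c p)
    (φF : ℝ → X → ℝ) (ψF : ℝ → Y → ℝ)
    (hφc : ∀ β : ℝ, 0 < β → Continuous (φF β))
    (hψc : ∀ β : ℝ, 0 < β → Continuous (ψF β))
    (h1 : ∀ β : ℝ, 0 < β → ∀ y : Y,
      ∫ x, Real.exp (β * A (x, y) + φF β x + ψF β y) ∂μ = 1)
    (h2 : ∀ β : ℝ, 0 < β → ∀ x : X,
      ∫ y, Real.exp (β * A (x, y) + φF β x + ψF β y) ∂ν = 1)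
    (πF : ℝ → Measure (X × Y))
    (hπF : ∀ β : ℝ, πF β = (μ.prod ν).withDensity
      (fun p => ENNReal.ofReal (Real.exp (β * A p + φF β p.1 + ψF β p.2))))
    (φ : X → ℝ) (ψ : Y → ℝ)
    (hφ : TendstoUniformly (fun β x => φF β x / β) φ atTop)
    (hψ : TendstoUniformly (fun β y => ψF β y / β) ψ atTop)
    (I : X × Y → ℝ) (hI : I = fun p => c p - φ p.1 - ψ p.2) :
    (∀ C : Set (X × Y), IsClosed C →
      Filter.limsup (fun β : ℝ => ((β⁻¹ : ℝ) : EReal) * ENNReal.log (πF β C)) atTop ≤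
        - ⨅ p ∈ C, ((I p : ℝ) : EReal)) ∧
    (∀ U : Set (X × Y), IsOpen U →
      - ⨅ p ∈ U, ((I p : ℝ) : EReal) ≤
        Filter.liminf (fun β : ℝ => ((β⁻¹ : ℝ) : EReal) * ENNReal.log (πF β U)) atTop) :=
  stmt15_general μ ν c L hc A hA φF ψF hφc hψc πF hπF φ ψ hφ hψ I hI
end
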